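/- Let γ ∈ (0,1), c_ρ ≥ 1 with γ²√c_ρ < 1. Suppose an operator T on pairs (M_μ, M_Σ) satisfies ‖(TM - TM')_μ‖_ν ≤ γ‖Δ_μ‖_ν and ‖(TM - TM')_Σ‖_{ν⊗ν} ≤ 2γ‖Δ_μ‖_ν + γ²√c_ρ ‖Δ_Σ‖_{ν⊗ν}, where Δ = M - M'. Then for any β ∈ (0, (1-γ²√c_ρ)/(2γ)), T is a κ-contraction with κ = max{γ, 2βγ + γ²√c_ρ} < 1 in the norm ‖M‖_{ν,β} = max{‖M_μ‖_ν, β‖M_Σ‖_{ν⊗ν}}. -/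

import Mathlib

/-
In the weighted norm `max ‖Δ_μ‖ (β ‖Δ_Σ‖)` the coupling term `2γ ‖Δ_μ‖` of the `Σ`-block is
damped by the factor `β`, so both blocks contract by `max γ (2βγ + γ²√c_ρ)`; the upper bound on `β`
is exactly what makes the second entry smaller than one.
-/

theorem max_mul_le_max_mul_max_of_triangular {a b a' b' β γ δ ε : ℝ}
    (ha : 0 ≤ a) (hβ : 0 ≤ β) (hγ : 0 ≤ γ) (hδ : 0 ≤ δ) (hε : 0 ≤ ε)
    (ha' : a' ≤ γ * a) (hb' : b' ≤ δ * a + ε * b) :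
    max a' (β * b') ≤ max γ (β * δ + ε) * max a (β * b) := by
  set m := max a (β * b)
  have ham : a ≤ m := le_max_left _ _
  have hbm : β * b ≤ m := le_max_right _ _
  have hm : 0 ≤ m := ha.trans ham
  refine max_le ?_ ?_
  · calc a' ≤ γ * a := ha'
      _ ≤ γ * m := by gcongr
      _ ≤ max γ (β * δ + ε) * m := by gcongr; exact le_max_left _ _
  · calc β * b' ≤ β * (δ * a + ε * b) := by gcongr
      _ = β * δ * a + ε * (β * b) := by ring
      _ ≤ β * δ * m + ε * m := by gcongr
      _ = (β * δ + ε) * m := by ring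
      _ ≤ max γ (β * δ + ε) * m := by gcongr; exact le_max_right _ _

theorem stmt12_general
    (V W : Type*) [NormedAddCommGroup V] [NormedAddCommGroup W]
    (γ cρ : ℝ) (hγ : γ ∈ Set.Ioo (0:ℝ) 1)
    (β : ℝ) (hβ : β ∈ Set.Ioo (0:ℝ) ((1 - γ ^ 2 * Real.sqrt cρ) / (2 * γ)))
    (T : V × W → V × W)
    (hTμ : ∀ M M' : V × W, ‖(T M - T M').1‖ ≤ γ * ‖(M - M').1‖)
    (hTS : ∀ M M' : V × W, ‖(T M - T M').2‖ ≤
      2 * γ * ‖(M - M').1‖ + γ ^ 2 * Real.sqrt cρ * ‖(M - M').2‖)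
    (κ : ℝ) (hκ : κ = max γ (2 * β * γ + γ ^ 2 * Real.sqrt cρ)) :
    κ < 1 ∧
    ∀ M M' : V × W,
      max ‖(T M - T M').1‖ (β * ‖(T M - T M').2‖) ≤
        κ * max ‖(M - M').1‖ (β * ‖(M - M').2‖) := by
  obtain ⟨hγ0, hγ1⟩ := hγ
  obtain ⟨hβ0, hβ1⟩ := hβ
  have hκ' : κ = max γ (β * (2 * γ) + γ ^ 2 * Real.sqrt cρ) := by rw [hκ]; ring_nf
  refine ⟨?_, fun M M' => ?_⟩
  · have hβγ : β * (2 * γ) < 1 - γ ^ 2 * Real.sqrt cρ := (lt_div_iff₀ (by positivity)).mp hβ1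
    rw [hκ']
    exact max_lt hγ1 (by linarith)
  · rw [hκ']
    exact max_mul_le_max_mul_max_of_triangular (norm_nonneg _) hβ0.le hγ0.le
      (by positivity) (by positivity) (hTμ M M') (hTS M M')

theorem stmt12
    (V W : Type*) [NormedAddCommGroup V] [NormedAddCommGroup W]
    (γ cρ : ℝ) (hγ : γ ∈ Set.Ioo (0:ℝ) 1) (hcρ : 1 ≤ cρ)
    (hsmall : γ ^ 2 * Real.sqrt cρ < 1)
    (β : ℝ) (hβ : β ∈ Set.Ioo (0:ℝ) ((1 - γ ^ 2 * Real.sqrt cρ) / (2 * γ)))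
    (T : V × W → V × W)
    (hTμ : ∀ M M' : V × W, ‖(T M - T M').1‖ ≤ γ * ‖(M - M').1‖)
    (hTS : ∀ M M' : V × W, ‖(T M - T M').2‖ ≤
      2 * γ * ‖(M - M').1‖ + γ ^ 2 * Real.sqrt cρ * ‖(M - M').2‖)
    (κ : ℝ) (hκ : κ = max γ (2 * β * γ + γ ^ 2 * Real.sqrt cρ)) :
    κ < 1 ∧
    ∀ M M' : V × W,
      max ‖(T M - T M').1‖ (β * ‖(T M - T M').2‖) ≤
        κ * max ‖(M - M').1‖ (β * ‖(M - M').2‖) :=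
  stmt12_general V W γ cρ hγ β hβ T hTμ hTS κ hκ
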